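/- arXiv:1807.10045 — 2 statements merged into one kernel-verified Lean document; each statement's English description precedes it below -/
import Mathlib

section
/- Right symmetrized bitableaux and Young symmetrizers, multilinear case: let S and T be multilinear tableaux of the same shape λ ⊢ h. Then in the polynomial ring ℂ[M_{h,h}] one has (S|⎕T) = (−1)^(h choose 2) · Σ_{σ∈R(S), τ∈C(T)} sgn(σ) · Π_{k=1}^h x_{(σ θ_{ST} τ)(k), k}. -/
open MvPolynomial

noncomputable section

def e2 : List ℕ → ℕ
  | [] => 0
  | a :: l => a * l.sum + e2 l

def IsShape (h : ℕ) (lam : List ℕ) : Prop :=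
  lam.Pairwise (· ≥ ·) ∧ (∀ a ∈ lam, 0 < a) ∧ lam.sum = h

def biprod (n d : ℕ) (ω : List (Fin n)) (ϖ : List (Fin d)) : MvPolynomial (Fin n × Fin d) ℂ :=
  if hl : ω.length = ϖ.length then
    (-1 : MvPolynomial (Fin n × Fin d) ℂ) ^ (ω.length.choose 2) *
      (Matrix.of fun r s : Fin ω.length =>
        (X (ω.get r, ϖ.get (Fin.cast hl s)) : MvPolynomial (Fin n × Fin d) ℂ)).det
  else 0

def rowWord (n : ℕ) (lam : List ℕ) (T : ℕ → ℕ → Fin n) (r : ℕ) : List (Fin n) :=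
  (List.range (lam.getD r 0)).map (T r)

def bitab (n d : ℕ) (lam : List ℕ) (S : ℕ → ℕ → Fin n) (T : ℕ → ℕ → Fin d) :
    MvPolynomial (Fin n × Fin d) ℂ :=
  (-1 : MvPolynomial (Fin n × Fin d) ℂ) ^ e2 lam *
    ∏ r ∈ Finset.range lam.length, biprod n d (rowWord n lam S r) (rowWord d lam T r)

def IsStandard (n : ℕ) (lam : List ℕ) (T : ℕ → ℕ → Fin n) : Prop :=
  (∀ r c, c + 1 < lam.getD r 0 → T r c < T r (c + 1)) ∧
  (∀ r c, c < lam.getD (r + 1) 0 → T r c ≤ T (r + 1) c)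

/-- the length of column `c` of the shape `lam`: the number of rows containing
a cell in column `c` -/
def colLen (lam : List ℕ) (c : ℕ) : ℕ := lam.countP (fun a => decide (c < a))

/-- `T̄`: the tableau obtained from `T` by applying, within each column `c` of the
shape `lam`, the permutation `π c` of the entries of that column -/
def applyColPerm (d : ℕ) (lam : List ℕ) (T : ℕ → ℕ → Fin d)
    (π : ∀ c : Fin (lam.headD 0), Equiv.Perm (Fin (colLen lam c))) :
    ℕ → ℕ → Fin d := fun r c =>
  if h : c < lam.headD 0 ∧ r < colLen lam c then
    T ((π ⟨c, h.1⟩) ⟨r, h.2⟩ : ℕ) c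
  else T r c

/-- the right symmetrized bitableau `(S|⎕T)`: the sum of `(S|T̄)` over all tuples
of column permutations (with multiplicity) -/
def symmBitab (n d : ℕ) (lam : List ℕ) (S : ℕ → ℕ → Fin n) (T : ℕ → ℕ → Fin d) :
    MvPolynomial (Fin n × Fin d) ℂ :=
  ∑ π : ∀ c : Fin (lam.headD 0), Equiv.Perm (Fin (colLen lam c)),
    bitab n d lam S (applyColPerm d lam T π)

/-- the (row-by-row, 0-indexed) cell number of the cell in row `r`, column `c` -/
def idx (lam : List ℕ) (r c : ℕ) : ℕ := (lam.take r).sum + c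

/-- the row of the `k`-th cell (cells numbered row by row, 0-indexed) -/
def cellRow : List ℕ → ℕ → ℕ
  | [], _ => 0
  | a :: l, k => if k < a then 0 else cellRow l (k - a) + 1

/-- the column of the `k`-th cell -/
def cellCol : List ℕ → ℕ → ℕ
  | [], k => k
  | a :: l, k => if k < a then k else cellCol l (k - a)

/-!
A multilinear tableau of shape `lam ⊢ h` is encoded as a permutation
`S : Equiv.Perm (Fin h)`: the entry in the cell numbered `k` is `S k`.

`σ` belongs to the row group `R(S)` iff every `a` lies in the same row of `S`
as `σ a`, that is, the cells `S⁻¹(σ a)` and `S⁻¹ a` have the same row; likewise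
for the column group `C(T)` with columns.
-/

/-!
Expanding each row biproduct of `(S|T̄)` by the Leibniz formula turns the bitableau into a
signed sum, over the permutations `ρ` of the cells that preserve rows, of
`∏ₘ x_{S(ρ m), T̄(m)}`; the signs `(-1)^(e2 λ)` and `(-1)^(λ_r choose 2)` combine to
`(-1)^(h choose 2)`. Likewise a tuple of column permutations is a permutation `κ` of the cells
preserving columns, with `T̄(m) = T(κ m)`. The substitution `σ = S ρ S⁻¹`, `τ = T κ⁻¹ T⁻¹`
carries these onto `R(S)` and `C(T)`, and reindexing the product by `k = T(κ⁻¹ m)` gives the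
Young symmetrizer form.
-/

lemma Nat.add_choose_two (a b : ℕ) : (a + b).choose 2 = a.choose 2 + a * b + b.choose 2 := by
  induction b with
  | zero => simp
  | succ b ih =>
    rw [← add_assoc, Nat.choose_succ_succ, ih, Nat.choose_succ_succ b 1, Nat.choose_one_right,
      Nat.choose_one_right]
    ring

lemma e2_add_sum_choose_two (lam : List ℕ) :
    e2 lam + ∑ r ∈ Finset.range lam.length, (lam.getD r 0).choose 2 = lam.sum.choose 2 := by
  induction lam with
  | nil => simp [e2]
  | cons a l ih =>
    rw [List.length_cons, Finset.sum_range_succ', List.sum_cons, Nat.add_choose_two, ← ih]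
    simp only [e2, List.getD_cons_succ, List.getD_cons_zero]
    ring

lemma List.getD_le_of_forall_le {l : List ℕ} {a : ℕ} (hl : ∀ x ∈ l, x ≤ a) (r : ℕ) :
    l.getD r 0 ≤ a := by
  rcases lt_or_ge r l.length with hr | hr
  · rw [List.getD_eq_getElem _ _ hr]; exact hl _ (List.getElem_mem hr)
  · rw [List.getD_eq_default _ _ hr]; exact Nat.zero_le a

namespace Equiv.Perm

variable {A : Type*} {β : A → Type*}

theorem sigmaCongrRight_mulSingle [DecidableEq A] (a : A) (x : Perm (β a)) :
    sigmaCongrRight (Pi.mulSingle a x) = x.extendDomain (sigmaSubtype a).symm := by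
  ext ⟨a', b⟩ : 1
  by_cases ha : a' = a
  · subst ha
    rw [extendDomain_apply_subtype _ _ (p := fun s : Σ a, β a => s.1 = a') rfl]
    simp [sigmaSubtype]
  · rw [extendDomain_apply_not_subtype _ _ (p := fun s : Σ a, β a => s.1 = a) ha]
    simp [Pi.mulSingle_eq_of_ne ha]

theorem sign_sigmaCongrRight [Fintype A] [DecidableEq A] [∀ a, Fintype (β a)]
    [∀ a, DecidableEq (β a)] (g : ∀ a, Perm (β a)) :
    sign (sigmaCongrRight g) = ∏ a, sign (g a) := by
  have key : sign.comp (sigmaCongrRightHom β) =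
      ∏ a, sign.comp (Pi.evalMonoidHom (fun a => Perm (β a)) a) := by
    refine MonoidHom.pi_ext fun a x => ?_
    rw [MonoidHom.finsetProd_apply, Finset.prod_eq_single a (fun b _ hb => by
      simp [Pi.mulSingle_eq_of_ne hb]) (by simp)]
    simp [sigmaCongrRightHom, sigmaCongrRight_mulSingle, sign_extendDomain]
  simpa [MonoidHom.finsetProd_apply] using DFunLike.congr_fun key g

theorem exists_sigmaCongrRight_eq (ρ : Perm (Σ a, β a)) (hρ : ∀ x, (ρ x).1 = x.1) :
    ∃ g : ∀ a, Perm (β a), sigmaCongrRight g = ρ := by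
  have mk_sigmaSubtype (a : A) (s : {s : Σ a, β a // s.1 = a}) :
      (⟨a, sigmaSubtype a s⟩ : Σ a, β a) = s := by
    obtain ⟨⟨a', b⟩, rfl⟩ := s
    rfl
  refine ⟨fun a => (sigmaSubtype a).permCongr (ρ.subtypePerm fun x => by rw [hρ]), ?_⟩
  ext ⟨a, b⟩ : 1
  simp only [sigmaCongrRight_apply, permCongr_apply]
  exact mk_sigmaSubtype a _

section FiberPerms

variable {α α' ι : Type*} [Fintype α] [DecidableEq α] [DecidableEq ι]

def fiberPerms (f : α → ι) : Finset (Perm α) :=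
  Finset.univ.filter fun ρ => ∀ a, f (ρ a) = f a

@[simp]
lemma mem_fiberPerms {f : α → ι} {ρ : Perm α} : ρ ∈ fiberPerms f ↔ ∀ a, f (ρ a) = f a := by
  simp [fiberPerms]

lemma fiberPerms_comp_of_injective {ι' : Type*} [DecidableEq ι'] (f : α → ι) {j : ι → ι'}
    (hj : Function.Injective j) : fiberPerms (j ∘ f) = fiberPerms f := by
  ext ρ
  simp [hj.eq_iff]

lemma inv_mem_fiberPerms_iff {f : α → ι} {ρ : Perm α} :
    ρ⁻¹ ∈ fiberPerms f ↔ ρ ∈ fiberPerms f := by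
  simp only [mem_fiberPerms]
  exact ⟨fun h a => by simpa using (h (ρ a)).symm,
    fun h a => by simpa using (h (ρ⁻¹ a)).symm⟩

variable {M : Type*} [AddCommMonoid M]

lemma sum_fiberPerms_inv (f : α → ι) (F : Perm α → M) :
    ∑ ρ ∈ fiberPerms f, F ρ⁻¹ = ∑ ρ ∈ fiberPerms f, F ρ :=
  Finset.sum_equiv (Equiv.inv _) (fun _ => inv_mem_fiberPerms_iff.symm) (fun _ _ => rfl)

lemma sum_fiberPerms_comp_symm [Fintype α'] [DecidableEq α'] (e : α ≃ α') (f : α → ι)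
    (F : Perm α' → M) :
    ∑ σ ∈ fiberPerms (f ∘ e.symm), F σ = ∑ ρ ∈ fiberPerms f, F (e.permCongr ρ) := by
  refine Finset.sum_equiv e.permCongr.symm (fun σ => ?_) (fun σ _ => by
    rw [apply_symm_apply])
  simp only [mem_fiberPerms, Function.comp_apply, permCongr_symm_apply]
  exact e.forall_congr_right.symm.trans (by simp)

lemma sum_fiberPerms_sigma [Fintype A] [DecidableEq A] [∀ a, Fintype (β a)]
    [∀ a, DecidableEq (β a)] (e : α ≃ Σ a, β a) (F : Perm α → M) :
    ∑ ρ ∈ fiberPerms (fun x => (e x).1), F ρ =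
      ∑ g : ∀ a, Perm (β a), F (e.symm.permCongr (sigmaCongrRight g)) := by
  symm
  refine Finset.sum_nbij (fun g => e.symm.permCongr (sigmaCongrRight g)) (fun g _ => ?_)
    (fun g _ g' _ hgg => ?_) (fun ρ hρ => ?_) (fun _ _ => rfl)
  · simp
  · exact sigmaCongrRightHom_injective (e.symm.permCongr.injective hgg)
  · obtain ⟨g, hg⟩ := exists_sigmaCongrRight_eq (e.permCongr ρ) fun x => by
      simpa using mem_fiberPerms.mp (Finset.mem_coe.mp hρ) (e.symm x)
    refine ⟨g, Finset.mem_coe.mpr (Finset.mem_univ g), ?_⟩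
    beta_reduce
    rw [hg, ← permCongr_symm, symm_apply_apply]

lemma sum_fiberPerms_conj {ι' R : Type*} [DecidableEq ι'] [CommRing R] (fR : α → ι)
    (fC : α → ι') (S T : Perm α) (G : α → α → R) :
    ∑ κ ∈ fiberPerms fC, ∑ ρ ∈ fiberPerms fR, ((sign ρ : ℤ) : R) * ∏ m, G (S (ρ m)) (T (κ m)) =
      ∑ σ ∈ fiberPerms (fR ∘ S.symm), ∑ τ ∈ fiberPerms (fC ∘ T.symm),
        ((sign σ : ℤ) : R) * ∏ k, G (σ (S (T.symm (τ k)))) k := by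
  rw [Finset.sum_comm, sum_fiberPerms_comp_symm S fR]
  refine Finset.sum_congr rfl fun ρ _ => ?_
  rw [sum_fiberPerms_comp_symm T fC, ← sum_fiberPerms_inv fC]
  refine Finset.sum_congr rfl fun κ _ => ?_
  rw [sign_permCongr]
  exact congrArg _ (Fintype.prod_equiv (κ.symm.trans T) _ _ fun m => by simp)

end FiberPerms

end Equiv.Perm

open Equiv (Perm)
open Equiv.Perm

section Tableaux

variable {n d : ℕ} (lam : List ℕ)

lemma idx_cons_succ (a r c : ℕ) : idx (a :: lam) (r + 1) c = a + idx lam r c := by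
  simp only [idx, List.take_succ_cons, List.sum_cons, Nat.add_assoc]

lemma idx_lt_sum {r c : ℕ} (hc : c < lam.getD r 0) : idx lam r c < lam.sum := by
  induction lam generalizing r with
  | nil => simp at hc
  | cons a l ih =>
    cases r with
    | zero => simpa [idx] using Nat.lt_add_right _ hc
    | succ r =>
      rw [idx_cons_succ, List.sum_cons]
      exact Nat.add_lt_add_left (ih hc) a

lemma cellRow_idx_and_cellCol_idx {r c : ℕ} (hc : c < lam.getD r 0) :
    cellRow lam (idx lam r c) = r ∧ cellCol lam (idx lam r c) = c := by
  induction lam generalizing r with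
  | nil => simp at hc
  | cons a l ih =>
    cases r with
    | zero => simp_all [idx, cellRow, cellCol]
    | succ r =>
      simp only [List.getD_cons_succ] at hc
      rw [idx_cons_succ, cellRow, cellCol, if_neg (by omega), if_neg (by omega),
        Nat.add_sub_cancel_left]
      exact ⟨congrArg (· + 1) (ih hc).1, (ih hc).2⟩

lemma cellRow_idx {r c : ℕ} (hc : c < lam.getD r 0) : cellRow lam (idx lam r c) = r :=
  (cellRow_idx_and_cellCol_idx lam hc).1

lemma cellCol_idx {r c : ℕ} (hc : c < lam.getD r 0) : cellCol lam (idx lam r c) = c :=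
  (cellRow_idx_and_cellCol_idx lam hc).2

lemma cellCol_lt_getD_cellRow {k : ℕ} (hk : k < lam.sum) :
    cellCol lam k < lam.getD (cellRow lam k) 0 := by
  induction lam generalizing k with
  | nil => simp at hk
  | cons a l ih =>
    by_cases h : k < a
    · simp [cellRow, cellCol, h]
    · simp only [cellRow, cellCol, h, if_false, List.getD_cons_succ]
      exact ih (by simp at hk; omega)

lemma idx_cellRow_cellCol {k : ℕ} (hk : k < lam.sum) :
    idx lam (cellRow lam k) (cellCol lam k) = k := by
  induction lam generalizing k with
  | nil => simp at hk
  | cons a l ih =>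
    by_cases h : k < a
    · simp [cellRow, cellCol, h, idx]
    · simp only [cellRow, cellCol, h, if_false]
      rw [idx_cons_succ, ih (by simp at hk; omega)]
      omega

lemma cellRow_lt_length {k : ℕ} (hk : k < lam.sum) : cellRow lam k < lam.length := by
  by_contra hle
  have := cellCol_lt_getD_cellRow lam hk
  rw [List.getD_eq_default _ _ (by omega)] at this
  omega

def cellEquivSigmaRow : Fin lam.sum ≃ Σ r : Fin lam.length, Fin (lam.getD r 0) where
  toFun m := ⟨⟨cellRow lam m, cellRow_lt_length lam m.isLt⟩,
    ⟨cellCol lam m, cellCol_lt_getD_cellRow lam m.isLt⟩⟩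
  invFun x := ⟨idx lam x.1 x.2, idx_lt_sum lam x.2.isLt⟩
  left_inv m := Fin.ext (idx_cellRow_cellCol lam m.isLt)
  right_inv := by
    rintro ⟨⟨r, hr⟩, ⟨c, hc⟩⟩
    refine Sigma.ext (Fin.ext (cellRow_idx lam hc))
      ((Fin.heq_ext_iff ?_).mpr (cellCol_idx lam hc))
    exact congrArg (lam.getD · 0) (cellRow_idx lam hc)

def cellEntry (U : ℕ → ℕ → Fin n) (k : ℕ) : Fin n := U (cellRow lam k) (cellCol lam k)

lemma cellEntry_cellEquivSigmaRow_symm (U : ℕ → ℕ → Fin n)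
    (x : Σ r : Fin lam.length, Fin (lam.getD r 0)) :
    cellEntry lam U ((cellEquivSigmaRow lam).symm x) = U x.1 x.2 := by
  conv_rhs => rw [← (cellEquivSigmaRow lam).apply_symm_apply x]
  rfl

lemma biprod_map_range (a : ℕ) (f : ℕ → Fin n) (g : ℕ → Fin d) :
    biprod n d ((List.range a).map f) ((List.range a).map g) =
      (-1) ^ a.choose 2 * ∑ q : Perm (Fin a),
        ((sign q : ℤ) : MvPolynomial (Fin n × Fin d) ℂ) * ∏ s : Fin a, X (f (q s), g s) := by
  have hf : ((List.range a).map f).length = a := by simp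
  have hl : ((List.range a).map f).length = ((List.range a).map g).length := by simp
  rw [biprod, dif_pos hl]
  congr 1
  · rw [hf]
  rw [← Matrix.det_reindex_self (finCongr hf) (Matrix.of _), Matrix.det_apply]
  refine Finset.sum_congr rfl fun q _ => ?_
  rw [Units.smul_def, zsmul_eq_mul]
  simp [Matrix.reindex_apply, List.get_eq_getElem]

lemma bitab_eq_sum_sigmaCongrRight (U : ℕ → ℕ → Fin n) (W : ℕ → ℕ → Fin d) :
    bitab n d lam U W = (-1) ^ lam.sum.choose 2 *
      ∑ g : ∀ r : Fin lam.length, Perm (Fin (lam.getD r 0)),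
        ((sign (sigmaCongrRight g) : ℤ) : MvPolynomial (Fin n × Fin d) ℂ) *
          ∏ x : Σ r : Fin lam.length, Fin (lam.getD r 0), X (U x.1 (g x.1 x.2), W x.1 x.2) := by
  simp only [bitab, rowWord, biprod_map_range, Finset.prod_mul_distrib,
    Finset.prod_pow_eq_pow_sum, ← mul_assoc, ← pow_add, e2_add_sum_choose_two]
  congr 1
  rw [← Fin.prod_univ_eq_prod_range (fun r => ∑ q : Perm (Fin (lam.getD r 0)), _),
    Fintype.prod_sum]
  refine Finset.sum_congr rfl fun g _ => ?_
  rw [Finset.prod_mul_distrib, sign_sigmaCongrRight, ← Finset.univ_sigma_univ,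
    Finset.prod_sigma]
  push_cast
  rfl

lemma bitab_eq_sum_fiberPerms_cellRow (U : ℕ → ℕ → Fin n) (W : ℕ → ℕ → Fin d) :
    bitab n d lam U W = (-1) ^ lam.sum.choose 2 *
      ∑ ρ ∈ fiberPerms (fun m : Fin lam.sum => cellRow lam m),
        ((sign ρ : ℤ) : MvPolynomial (Fin n × Fin d) ℂ) *
          ∏ m : Fin lam.sum, X (cellEntry lam U (ρ m), cellEntry lam W m) := by
  have hrows : fiberPerms (fun m : Fin lam.sum => cellRow lam m) =
      fiberPerms (fun m => (cellEquivSigmaRow lam m).1) :=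
    fiberPerms_comp_of_injective (fun m => (cellEquivSigmaRow lam m).1) Fin.val_injective
  rw [bitab_eq_sum_sigmaCongrRight, hrows, sum_fiberPerms_sigma]
  congr 1
  refine Finset.sum_congr rfl fun g _ => ?_
  rw [sign_permCongr, ← (cellEquivSigmaRow lam).prod_comp]
  congr 1
  refine Finset.prod_congr rfl fun m _ => ?_
  rw [Equiv.permCongr_apply, Equiv.symm_symm, cellEntry_cellEquivSigmaRow_symm]
  rfl

variable {lam}

lemma colLen_cons (a : ℕ) (l : List ℕ) (c : ℕ) :
    colLen (a :: l) c = colLen l c + if c < a then 1 else 0 := by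
  simp [colLen, List.countP_cons]

lemma lt_colLen_iff (hs : lam.Pairwise (· ≥ ·)) {r c : ℕ} :
    r < colLen lam c ↔ c < lam.getD r 0 := by
  induction lam generalizing r with
  | nil => simp [colLen]
  | cons a l ih =>
    obtain ⟨hle, hs⟩ := List.pairwise_cons.mp hs
    by_cases hca : c < a
    · cases r with
      | zero => simp [colLen_cons, hca]
      | succ r =>
        simp only [colLen_cons, hca, if_true, List.getD_cons_succ]
        exact Nat.add_lt_add_iff_right.trans (ih hs)
    · have hzero : colLen l c = 0 :=
        List.countP_eq_zero.mpr fun x hx => by simpa using (hle x hx).trans (not_lt.mp hca)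
      cases r with
      | zero => simp [colLen_cons, hca, hzero]
      | succ r =>
        simp only [colLen_cons, hca, hzero, if_false, List.getD_cons_succ]
        have := List.getD_le_of_forall_le hle r
        omega

lemma lt_headD_of_lt_getD (hs : lam.Pairwise (· ≥ ·)) {r c : ℕ} (hc : c < lam.getD r 0) :
    c < lam.headD 0 := by
  have h0 : 0 < colLen lam c := Nat.zero_lt_of_lt ((lt_colLen_iff hs).mpr hc)
  cases lam with
  | nil => simp at hc
  | cons a l => simpa using (lt_colLen_iff hs).mp h0

def cellEquivSigmaCol (hs : lam.Pairwise (· ≥ ·)) :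
    Fin lam.sum ≃ Σ c : Fin (lam.headD 0), Fin (colLen lam c) :=
  (cellEquivSigmaRow lam).trans
    { toFun x := ⟨⟨x.2, lt_headD_of_lt_getD hs x.2.isLt⟩,
        ⟨x.1, (lt_colLen_iff hs).mpr x.2.isLt⟩⟩
      invFun y := ⟨⟨y.2, y.2.isLt.trans_le List.countP_le_length⟩,
        ⟨y.1, (lt_colLen_iff hs).mp y.2.isLt⟩⟩
      left_inv _ := rfl
      right_inv _ := rfl }

lemma cellEntry_cellEquivSigmaCol_symm (hs : lam.Pairwise (· ≥ ·)) (U : ℕ → ℕ → Fin n)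
    (y : Σ c : Fin (lam.headD 0), Fin (colLen lam c)) :
    cellEntry lam U ((cellEquivSigmaCol hs).symm y) = U y.2 y.1 := by
  conv_rhs => rw [← (cellEquivSigmaCol hs).apply_symm_apply y]
  rfl

lemma cellEntry_applyColPerm (hs : lam.Pairwise (· ≥ ·)) (W : ℕ → ℕ → Fin d)
    (π : ∀ c : Fin (lam.headD 0), Perm (Fin (colLen lam c))) (m : Fin lam.sum) :
    cellEntry lam (applyColPerm d lam W π) m =
      cellEntry lam W ((cellEquivSigmaCol hs).symm.permCongr (sigmaCongrRight π) m) := by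
  rw [Equiv.permCongr_apply, Equiv.symm_symm, cellEntry_cellEquivSigmaCol_symm]
  exact dif_pos ⟨((cellEquivSigmaCol hs) m).1.isLt, ((cellEquivSigmaCol hs) m).2.isLt⟩

lemma symmBitab_eq_sum_fiberPerms (hs : lam.Pairwise (· ≥ ·)) (U : ℕ → ℕ → Fin n)
    (V : ℕ → ℕ → Fin d) :
    symmBitab n d lam U V = (-1) ^ lam.sum.choose 2 *
      ∑ κ ∈ fiberPerms (fun m : Fin lam.sum => cellCol lam m),
        ∑ ρ ∈ fiberPerms (fun m : Fin lam.sum => cellRow lam m),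
          ((sign ρ : ℤ) : MvPolynomial (Fin n × Fin d) ℂ) *
            ∏ m : Fin lam.sum, X (cellEntry lam U (ρ m), cellEntry lam V (κ m)) := by
  have hcols : fiberPerms (fun m : Fin lam.sum => cellCol lam m) =
      fiberPerms (fun m => (cellEquivSigmaCol hs m).1) :=
    fiberPerms_comp_of_injective (fun m => (cellEquivSigmaCol hs m).1) Fin.val_injective
  simp only [symmBitab, bitab_eq_sum_fiberPerms_cellRow, cellEntry_applyColPerm hs,
    ← Finset.mul_sum]
  rw [hcols, sum_fiberPerms_sigma]

lemma cellEntry_eq_of_forall_idx (S : Fin lam.sum → Fin n) (U : ℕ → ℕ → Fin n)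
    (hU : ∀ r c (_ : c < lam.getD r 0) (hi : idx lam r c < lam.sum),
      U r c = S ⟨idx lam r c, hi⟩)
    (m : Fin lam.sum) : cellEntry lam U m = S m := by
  have hm := idx_cellRow_cellCol lam m.isLt
  exact (hU _ _ (cellCol_lt_getD_cellRow lam m.isLt) (hm.trans_lt m.isLt)).trans
    (congrArg S (Fin.ext hm))

end Tableaux

/-- right symmetrized bitableaux and Young symmetrizers, the
multilinear case: for multilinear tableaux `S, T` of the same shape `λ ⊢ h`,
in `ℂ[M_{h,h}]` one has
`(S|⎕T) = (−1)^(h choose 2) · Σ_{σ∈R(S), τ∈C(T)} sgn(σ) · Π_k x_{(σ θ_{ST} τ)(k), k}`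
where `θ_{ST} = S ∘ T⁻¹`. Here `U, V : ℕ → ℕ → Fin h` are the cellwise
function encodings of the multilinear tableaux `S, T`. -/
theorem symmBitab_eq_youngSymmetrizer_multilinear (h : ℕ)
    (lam : List ℕ) (hlam : IsShape h lam)
    (S T : Equiv.Perm (Fin h))
    (U V : ℕ → ℕ → Fin h)
    (hU : ∀ r c (_ : c < lam.getD r 0) (hi : idx lam r c < h), U r c = S ⟨idx lam r c, hi⟩)
    (hV : ∀ r c (_ : c < lam.getD r 0) (hi : idx lam r c < h), V r c = T ⟨idx lam r c, hi⟩) :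
    symmBitab h h lam U V =
      (-1 : MvPolynomial (Fin h × Fin h) ℂ) ^ h.choose 2 *
        ∑ σ ∈ Finset.univ.filter
            (fun σ : Equiv.Perm (Fin h) =>
              ∀ a, cellRow lam (S.symm (σ a)) = cellRow lam (S.symm a)),
          ∑ τ ∈ Finset.univ.filter
              (fun τ : Equiv.Perm (Fin h) =>
                ∀ a, cellCol lam (T.symm (τ a)) = cellCol lam (T.symm a)),
            ((Equiv.Perm.sign σ : ℤ) : MvPolynomial (Fin h × Fin h) ℂ) *
              ∏ k : Fin h, X (σ (S (T.symm (τ k))), k) := by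
  obtain ⟨hs, -, rfl⟩ := hlam
  rw [symmBitab_eq_sum_fiberPerms hs]
  simp only [cellEntry_eq_of_forall_idx S U hU, cellEntry_eq_of_forall_idx T V hV]
  rw [sum_fiberPerms_conj _ _ S T fun a b => X (a, b)]
  simp only [fiberPerms, Function.comp_apply]

end
end

section
/- Well-definedness of the immanant operator: for every natural number h, every class function χ on the symmetric group S_h, and all positive integers n, d, there exists a linear endomorphism IMM_χ of the h-th homogeneous component ℂ_h[M_{n,d}] such that IMM_χ( Π_{k=1}^h x_{i_k j_k} ) = Σ_{σ∈S_h} χ(σ) · Π_{k=1}^h x_{i_{σ(k)} j_k} for every i = (i_1,…,i_h) ∈ {1,…,n}^h and j = (j_1,…,j_h) ∈ {1,…,d}^h. -/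
/-!
A monomial `∏ₖ x_{iₖ jₖ}` of degree `h` only remembers the multiset of the pairs `(iₖ, jₖ)`,
so two index sequences `(i, j)` and `(i', j')` presenting the same monomial differ by a
permutation `π` of the positions: `(i', j') = (i ∘ π, j ∘ π)`. Substituting `π` conjugates the
summation variable `σ` by `π`, which the class function `χ` does not see. Hence the right-hand
side is a function of the monomial alone; extend it linearly from the monomial basis.
-/

open MvPolynomial Finset Equiv

noncomputable section

section FiberEquiv

variable {ι κ α : Type*} [Fintype ι] [Fintype κ]

theorem Finsupp.sum_single_one_apply [DecidableEq α] (g : ι → α) (a : α) :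
    (∑ k, Finsupp.single (g k) 1 : α →₀ ℕ) a = #{k | g k = a} := by
  simp [Finsupp.finsetSum_apply, Finsupp.single_apply, Finset.sum_boole]

theorem exists_equiv_comp_eq_of_sum_single_eq {f : ι → α} {g : κ → α}
    (H : ∑ k, Finsupp.single (f k) 1 = ∑ k, Finsupp.single (g k) (1 : ℕ)) :
    ∃ e : ι ≃ κ, ∀ x, g (e x) = f x := by
  classical
  have hcard : ∀ a, Fintype.card {x // f x = a} = Fintype.card {y // g y = a} := fun a => by
    simpa [Fintype.card_subtype, Finsupp.sum_single_one_apply] using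
      DFunLike.congr_fun H a
  exact ⟨Equiv.ofFiberEquiv fun a => Fintype.equivOfCardEq (hcard a),
    Equiv.ofFiberEquiv_map _⟩

end FiberEquiv

section Immanant

variable {R ι α β : Type*} [CommSemiring R] [Fintype ι] [DecidableEq ι]

def immanantTerm (χ : Perm ι → R) (i : ι → α) (j : ι → β) : MvPolynomial (α × β) R :=
  ∑ σ : Perm ι, C (χ σ) * ∏ k, X (i (σ k), j k)

theorem immanantTerm_comp_perm {χ : Perm ι → R} (hχ : ∀ σ τ, χ (τ * σ * τ⁻¹) = χ σ)
    (i : ι → α) (j : ι → β) (π : Perm ι) :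
    immanantTerm χ (i ∘ π) (j ∘ π) = immanantTerm χ i j := by
  refine Fintype.sum_equiv (MulAut.conj π).toEquiv _ _ fun σ => ?_
  simp only [MulEquiv.toEquiv_eq_coe, MulEquiv.coe_toEquiv, MulAut.conj_apply, hχ,
    Function.comp_apply]
  congr 1
  rw [← Equiv.prod_comp π fun k => X (i ((π * σ * π⁻¹) k), j k)]
  simp [Equiv.Perm.mul_apply]

theorem isHomogeneous_immanantTerm (χ : Perm ι → R) (i : ι → α) (j : ι → β) :
    (immanantTerm χ i j).IsHomogeneous (Fintype.card ι) := by
  refine IsHomogeneous.sum _ _ _ fun σ _ => IsHomogeneous.C_mul ?_ _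
  simpa using IsHomogeneous.prod univ _ (fun _ => 1) fun k _ => isHomogeneous_X R (i (σ k), j k)

open Classical in
def immanantOnExponent (χ : Perm ι → R) (m : α × β →₀ ℕ) : MvPolynomial (α × β) R :=
  if H : ∃ ij : (ι → α) × (ι → β), ∑ k, Finsupp.single (ij.1 k, ij.2 k) 1 = m then
    immanantTerm χ H.choose.1 H.choose.2
  else 0

theorem immanantOnExponent_sum_single {χ : Perm ι → R} (hχ : ∀ σ τ, χ (τ * σ * τ⁻¹) = χ σ)
    (i : ι → α) (j : ι → β) :
    immanantOnExponent χ (∑ k, Finsupp.single (i k, j k) 1) = immanantTerm χ i j := by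
  have H : ∃ ij : (ι → α) × (ι → β),
      ∑ k, Finsupp.single (ij.1 k, ij.2 k) 1 = ∑ k, Finsupp.single (i k, j k) 1 := ⟨(i, j), rfl⟩
  rw [immanantOnExponent, dif_pos H]
  obtain ⟨π, hπ⟩ := exists_equiv_comp_eq_of_sum_single_eq H.choose_spec
  have hi : i ∘ π = H.choose.1 := funext fun k => congrArg Prod.fst (hπ k)
  have hj : j ∘ π = H.choose.2 := funext fun k => congrArg Prod.snd (hπ k)
  rw [← hi, ← hj, immanantTerm_comp_perm hχ]

theorem immanantOnExponent_mem (χ : Perm ι → R) (m : α × β →₀ ℕ) :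
    immanantOnExponent χ m ∈ homogeneousSubmodule (α × β) R (Fintype.card ι) := by
  unfold immanantOnExponent
  split_ifs
  · exact isHomogeneous_immanantTerm χ _ _
  · exact Submodule.zero_mem _

def immanantOperator (χ : Perm ι → R) : MvPolynomial (α × β) R →ₗ[R] MvPolynomial (α × β) R :=
  (basisMonomials (α × β) R).constr R (immanantOnExponent χ)

theorem immanantOperator_prod_X {χ : Perm ι → R} (hχ : ∀ σ τ, χ (τ * σ * τ⁻¹) = χ σ)
    (i : ι → α) (j : ι → β) :
    immanantOperator χ (∏ k, X (i k, j k)) = immanantTerm χ i j := by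
  have hmonomial : ∏ k, X (i k, j k) =
      basisMonomials (α × β) R (∑ k, Finsupp.single (i k, j k) 1) := by
    simp [coe_basisMonomials, monomial_sum_one, X]
  rw [hmonomial, immanantOperator, Module.Basis.constr_basis, immanantOnExponent_sum_single hχ]

theorem immanantOperator_mem (χ : Perm ι → R) (p : MvPolynomial (α × β) R) :
    immanantOperator χ p ∈ homogeneousSubmodule (α × β) R (Fintype.card ι) := by
  have hrange : LinearMap.range (immanantOperator (α := α) (β := β) χ) ≤
      homogeneousSubmodule (α × β) R (Fintype.card ι) := by
    rw [immanantOperator, Module.Basis.constr_range, Submodule.span_le]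
    rintro _ ⟨m, rfl⟩
    exact immanantOnExponent_mem χ m
  exact hrange (LinearMap.mem_range_self _ p)

end Immanant

theorem imm_operator_well_defined_general (h : ℕ) (χ : Equiv.Perm (Fin h) → ℂ)
    (hχ : ∀ σ τ : Equiv.Perm (Fin h), χ (τ * σ * τ⁻¹) = χ σ)
    (n d : ℕ) :
    ∃ IMM : MvPolynomial.homogeneousSubmodule (Fin n × Fin d) ℂ h →ₗ[ℂ]
        MvPolynomial.homogeneousSubmodule (Fin n × Fin d) ℂ h,
      ∀ (i : Fin h → Fin n) (j : Fin h → Fin d)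
        (p : MvPolynomial.homogeneousSubmodule (Fin n × Fin d) ℂ h),
        (p : MvPolynomial (Fin n × Fin d) ℂ) = ∏ k : Fin h, X (i k, j k) →
        (IMM p : MvPolynomial (Fin n × Fin d) ℂ) =
          ∑ σ : Equiv.Perm (Fin h), C (χ σ) * ∏ k : Fin h, X (i (σ k), j k) := by
  refine ⟨(immanantOperator χ).restrict fun p _ => ?_, fun i j p hp => ?_⟩
  · simpa using immanantOperator_mem χ p
  · rw [LinearMap.coe_restrict_apply, hp, immanantOperator_prod_X hχ, immanantTerm]

theorem imm_operator_well_defined (h : ℕ) (χ : Equiv.Perm (Fin h) → ℂ)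
    (hχ : ∀ σ τ : Equiv.Perm (Fin h), χ (τ * σ * τ⁻¹) = χ σ)
    (n d : ℕ) (hn : 0 < n) (hd : 0 < d) :
    ∃ IMM : MvPolynomial.homogeneousSubmodule (Fin n × Fin d) ℂ h →ₗ[ℂ]
        MvPolynomial.homogeneousSubmodule (Fin n × Fin d) ℂ h,
      ∀ (i : Fin h → Fin n) (j : Fin h → Fin d)
        (p : MvPolynomial.homogeneousSubmodule (Fin n × Fin d) ℂ h),
        (p : MvPolynomial (Fin n × Fin d) ℂ) = ∏ k : Fin h, X (i k, j k) →
        (IMM p : MvPolynomial (Fin n × Fin d) ℂ) =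
          ∑ σ : Equiv.Perm (Fin h), C (χ σ) * ∏ k : Fin h, X (i (σ k), j k) :=
  imm_operator_well_defined_general h χ hχ n d


end
end
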